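/- arXiv:1901.07791 — 8 statements merged into one kernel-verified Lean document; each statement's English description precedes it below -/
import Mathlib

section
/- For λ = (λ₁, λ₂, λ₃) ∈ ℝ³ with λ₁ ≥ λ₂ ≥ λ₃, σ₁(λ) > 0, and σ₂(λ) > 0, one has σ₂^{11}(λ)·λ₁ ≥ c₁·σ₂(λ) for some constant c₁ > 0 depending only on the dimension (n = 3), where σ₂^{11}(λ) = ∂σ₂/∂λ₁ = λ₂ + λ₃. -/
/-- For λ = (λ₁, λ₂, λ₃) ∈ ℝ³ with λ₁ ≥ λ₂ ≥ λ₃, σ₁(λ) > 0 and σ₂(λ) > 0,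
one has σ₂^{11}(λ)·λ₁ ≥ c₁·σ₂(λ) for some dimensional constant c₁ > 0, where
σ₂^{11}(λ) = λ₂ + λ₃. -/
theorem sigma2_11_lambda1_lower_bound :
    ∃ c₁ : ℝ, 0 < c₁ ∧ ∀ l1 l2 l3 : ℝ, l1 ≥ l2 → l2 ≥ l3 →
      0 < l1 + l2 + l3 → 0 < l1 * l2 + l1 * l3 + l2 * l3 →
      (l2 + l3) * l1 ≥ c₁ * (l1 * l2 + l1 * l3 + l2 * l3) := by
  refine ⟨1/2, by norm_num, fun l1 l2 l3 h12 h23 hs1 hs2 => ?_⟩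
  rcases le_or_gt (l2 * l3) 0 with h | h
  · nlinarith
  · -- l2 and l3 have the same sign; both negative contradicts σ₂ > 0
    rcases le_or_gt l3 0 with h3 | h3
    · -- then l3 < 0 and l2 < 0
      have h3' : l3 < 0 := lt_of_le_of_ne h3 (by intro e; rw [e] at h; simp at h)
      have h2' : l2 < 0 := by nlinarith
      nlinarith [sq_nonneg (l2 - l3), sq_nonneg (l2 + l3), mul_pos hs1 (show 0 < -(l2+l3) by nlinarith)]
    · -- all positive
      have h2 : 0 < l2 := lt_of_lt_of_le h3 h23
      have h1 : 0 < l1 := lt_of_lt_of_le h2 h12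
      nlinarith [mul_le_mul_of_nonneg_right h12 h3.le]
end

section
/- For λ = (λ₁, λ₂, λ₃) ∈ ℝ³ with λ₁ ≥ λ₂ ≥ λ₃, σ₁(λ) > 0, and σ₂(λ) > 0, for every j ∈ {2, 3} one has σ₂^{jj}(λ) ≥ c₂·σ₁(λ) for some constant c₂ > 0 depending only on the dimension, where σ₂^{jj}(λ) = ∂σ₂/∂λⱼ. -/
/-- For ordered λ ∈ Γ₂ ⊂ ℝ³, for every j ∈ {2,3} one has
σ₂^{jj}(λ) = σ₁(λ) − λⱼ ≥ c₂·σ₁(λ) for a dimensional constant c₂ > 0. -/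
theorem sigma2_jj_lower_bound :
    ∃ c₂ : ℝ, 0 < c₂ ∧ ∀ l1 l2 l3 : ℝ, l1 ≥ l2 → l2 ≥ l3 →
      0 < l1 + l2 + l3 → 0 < l1 * l2 + l1 * l3 + l2 * l3 →
      ((l1 + l2 + l3) - l2 ≥ c₂ * (l1 + l2 + l3) ∧
       (l1 + l2 + l3) - l3 ≥ c₂ * (l1 + l2 + l3)) := by
  refine ⟨1/3, by norm_num, fun l1 l2 l3 h12 h23 hs1 hs2 => ?_⟩
  have key : (l1 + l2 + l3) - l2 ≥ (1/3) * (l1 + l2 + l3) := by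
    nlinarith [mul_nonneg (sub_nonneg.2 h12) (sub_nonneg.2 h23), sq_nonneg l2,
      mul_pos hs1 hs1, sq_nonneg (l1 - l3), sq_nonneg (l1 + l3),
      mul_self_nonneg (2*(l1+l2+l3) - 3*l2)]
  exact ⟨key, by linarith⟩
end

section
/- For λ ∈ ℝⁿ with σ₁(λ) > 0 and σ₂(λ) > 0, there is a dimensional constant c > 0 such that for every index i, σ₂^{ii}(λ) ≥ c·σ₂(λ)/σ₁(λ), where σ₂^{ii}(λ) = σ₁(λ) − λᵢ. -/
open Finset in
/-- For λ ∈ ℝⁿ with σ₁(λ) > 0 and σ₂(λ) > 0, there is a dimensional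
constant c > 0 such that for every i, σ₂^{ii}(λ) = σ₁(λ) − λᵢ ≥ c·σ₂(λ)/σ₁(λ). -/
theorem sigma2_ii_lower_bound (n : ℕ) :
    ∃ c : ℝ, 0 < c ∧ ∀ l : Fin n → ℝ,
      0 < ∑ i, l i →
      0 < ∑ i, ∑ j ∈ univ.filter (fun j => i < j), l i * l j →
      ∀ i, (∑ k, l k) - l i ≥
        c * (∑ i, ∑ j ∈ univ.filter (fun j => i < j), l i * l j) / (∑ k, l k) := by
  refine ⟨1, one_pos, fun l h1 h2 i => ?_⟩
  set S1 := ∑ k, l k with hS1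
  set S2 := ∑ i, ∑ j ∈ univ.filter (fun j => i < j), l i * l j with hS2
  -- key identity: S1^2 = ∑ l k ^2 + 2 * S2
  have swap : ∑ i, ∑ j ∈ univ.filter (fun j => j < i), l i * l j = S2 := by
    rw [Finset.sum_comm' (s' := fun j => univ.filter (fun i => j < i)) (t' := univ)
      (by simp)]
    rw [hS2]
    exact Finset.sum_congr rfl fun i _ => Finset.sum_congr rfl fun j _ => mul_comm _ _
  have key : S1 ^ 2 = (∑ k, (l k) ^ 2) + 2 * S2 := by
    have h0 : S1 ^ 2 = ∑ i, ∑ j, l i * l j := by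
      rw [sq, hS1, Finset.sum_mul_sum]
    rw [h0]
    have hsplit : ∀ i : Fin n, (∑ j, l i * l j) =
        (l i) ^ 2 + ((∑ j ∈ univ.filter (fun j => i < j), l i * l j)
          + ∑ j ∈ univ.filter (fun j => j < i), l i * l j) := by
      intro i
      have : (univ : Finset (Fin n)) =
          {i} ∪ (univ.filter (fun j => i < j) ∪ univ.filter (fun j => j < i)) := by
        ext j
        simp [lt_or_gt_of_ne, eq_comm]
        rcases lt_trichotomy i j with h | h | h <;> tauto
      conv_lhs => rw [this]
      rw [Finset.sum_union, Finset.sum_union]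
      · simp [sq]
      · rw [Finset.disjoint_filter]
        intro x _ hx
        simp at hx ⊢
        omega
      · simp only [Finset.disjoint_union_right, Finset.disjoint_singleton_left]
        constructor <;> simp
    rw [Finset.sum_congr rfl fun i _ => hsplit i, Finset.sum_add_distrib,
      Finset.sum_add_distrib, swap, ← hS2]
    ring
  have hsq : (l i) ^ 2 ≤ ∑ k, (l k) ^ 2 :=
    Finset.single_le_sum (fun k _ => sq_nonneg (l k)) (Finset.mem_univ i)
  have ht : 0 < S1 - l i := by nlinarith
  rw [ge_iff_le, one_mul, div_le_iff₀ h1]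
  nlinarith
end

section
/- If λ = (λ₁, …, λₙ) are the eigenvalues of a symmetric matrix A with σ₁(λ) > 0 and σ₂(λ) > 0 (i.e. λ ∈ Γ₂), then each eigenvalue satisfies |λᵢ| ≤ σ₁(λ). In particular max_i |λᵢ| ≤ σ₁(λ). -/
open Finset in
lemma sq_sum_eq_sum_sq_add_two_mul {n : ℕ} (f : Fin n → ℝ) :
    (∑ i, f i) ^ 2 = (∑ i, f i ^ 2)
      + 2 * ∑ i, ∑ j ∈ univ.filter (fun j => i < j), f i * f j := by
  have key : ∀ i : Fin n, ∑ j, f i * f j =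
      f i ^ 2 + (∑ j ∈ univ.filter (fun j => i < j), f i * f j)
        + (∑ j ∈ univ.filter (fun j => j < i), f i * f j) := by
    intro i
    have : ∀ j : Fin n, f i * f j =
        (if j = i then f i * f j else 0) + (if i < j then f i * f j else 0)
          + (if j < i then f i * f j else 0) := by
      intro j
      rcases lt_trichotomy i j with h | h | h
      · simp [h, h.ne', not_lt_of_gt h]
      · simp [h, lt_irrefl]
      · simp [h, h.ne, not_lt_of_gt h]
    calc ∑ j, f i * f j
        = ∑ j, ((if j = i then f i * f j else 0) + (if i < j then f i * f j else 0)
            + (if j < i then f i * f j else 0)) := Finset.sum_congr rfl (fun j _ => this j)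
      _ = _ := by
          rw [Finset.sum_add_distrib, Finset.sum_add_distrib,
            Finset.sum_ite_eq' univ i (fun j => f i * f j),
            ← Finset.sum_filter, ← Finset.sum_filter]
          simp [sq]
  have swap : (∑ i, ∑ j ∈ univ.filter (fun j => j < i), f i * f j)
      = ∑ i, ∑ j ∈ univ.filter (fun j => i < j), f i * f j := by
    simp only [Finset.sum_filter]
    rw [Finset.sum_comm]
    congr 1; ext i; congr 1; ext j
    rw [mul_comm]
  calc (∑ i, f i) ^ 2 = ∑ i, ∑ j, f i * f j := by
        rw [sq, Finset.sum_mul_sum]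
    _ = ∑ i, (f i ^ 2 + (∑ j ∈ univ.filter (fun j => i < j), f i * f j)
          + (∑ j ∈ univ.filter (fun j => j < i), f i * f j)) :=
        Finset.sum_congr rfl (fun i _ => key i)
    _ = _ := by
        rw [Finset.sum_add_distrib, Finset.sum_add_distrib, swap]; ring

open Finset in
/-- If λ are the eigenvalues of a symmetric matrix A with σ₁(λ) > 0 and
σ₂(λ) > 0 (λ ∈ Γ₂), then |λᵢ| ≤ σ₁(λ) for each i. -/
theorem abs_eigenvalue_le_sigma1 {n : ℕ} (A : Matrix (Fin n) (Fin n) ℝ)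
    (hA : A.IsHermitian)
    (h1 : 0 < ∑ i, hA.eigenvalues i)
    (h2 : 0 < ∑ i, ∑ j ∈ univ.filter (fun j => i < j), hA.eigenvalues i * hA.eigenvalues j) :
    ∀ i, |hA.eigenvalues i| ≤ ∑ i, hA.eigenvalues i := by
  intro i
  set μ := hA.eigenvalues
  have hid := sq_sum_eq_sum_sq_add_two_mul μ
  have hsq : μ i ^ 2 ≤ ∑ j, μ j ^ 2 :=
    Finset.single_le_sum (fun j _ => sq_nonneg (μ j)) (Finset.mem_univ i)
  have h3 : μ i ^ 2 ≤ (∑ j, μ j) ^ 2 := by nlinarith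
  have ha : |μ i| ^ 2 = μ i ^ 2 := sq_abs _
  nlinarith [abs_nonneg (μ i)]
end

section
/- (Claim 1 of the paper.) Let λ₁ ≥ λ₂ ≥ λ₃ with σ₁ > 0 and σ₂ > 0, and let 0 < ε ≤ 2/3. Then for all real s, t: (2(σ₂^{11}+σ₂^{22})/(σ₁σ₂^{11}))·s² + (2(σ₂^{11}+σ₂^{33})/(σ₁σ₂^{11}))·t² + (4λ₁/(σ₁σ₂^{11}))·s·t ≥ (2ε σ₁ (s+t)²)/(σ₁σ₂^{11}), provided σ₂^{11} = λ₂+λ₃ > 0. -/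
/-! After clearing the positive denominator `σ₁σ₂¹¹`, the claim is monotone in `ε`, so it suffices
to take `ε = 2/3`. There the difference of the two sides is `2/3` times the quadratic form
`a s² + 2b st + c t²` with `a = λ₁ + λ₂ + 4λ₃`, `b = λ₁ - 2λ₂ - 2λ₃`, `c = λ₁ + 4λ₂ + λ₃`.
Its discriminant is `ac - b² = 9σ₂ > 0`, and `a > 0` because `σ₂¹¹ a = σ₂ + (λ₂ + 2λ₃)²`. -/

theorem quadratic_form_nonneg {a b c : ℝ} (ha : 0 < a) (hdisc : b ^ 2 ≤ a * c) (s t : ℝ) :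
    0 ≤ a * s ^ 2 + 2 * b * s * t + c * t ^ 2 := by
  have hdet : 0 ≤ a * c - b ^ 2 := sub_nonneg.2 hdisc
  have hsq : a * (a * s ^ 2 + 2 * b * s * t + c * t ^ 2) =
      (a * s + b * t) ^ 2 + (a * c - b ^ 2) * t ^ 2 := by ring
  refine nonneg_of_mul_nonneg_right ?_ ha
  rw [hsq]
  positivity

theorem add_add_four_mul_pos {l1 l2 l3 : ℝ} (h11 : 0 < l2 + l3)
    (h2 : 0 < l1 * l2 + l1 * l3 + l2 * l3) : 0 < l1 + l2 + 4 * l3 := by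
  have hid : (l2 + l3) * (l1 + l2 + 4 * l3) =
      (l1 * l2 + l1 * l3 + l2 * l3) + (l2 + 2 * l3) ^ 2 := by ring
  refine pos_of_mul_pos_right ?_ h11.le
  rw [hid]
  positivity

theorem claim1_numerator_le {ε l1 l2 l3 : ℝ} (h1 : 0 < l1 + l2 + l3)
    (h2 : 0 < l1 * l2 + l1 * l3 + l2 * l3) (hε : ε ≤ 2 / 3) (h11 : 0 < l2 + l3) (s t : ℝ) :
    2 * ε * (l1 + l2 + l3) * (s + t) ^ 2 ≤
      2 * (((l1 + l2 + l3) - l1) + ((l1 + l2 + l3) - l2)) * s ^ 2 +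
        2 * (((l1 + l2 + l3) - l1) + ((l1 + l2 + l3) - l3)) * t ^ 2 + 4 * l1 * (s * t) := by
  have hdisc : (l1 - 2 * l2 - 2 * l3) ^ 2 ≤ (l1 + l2 + 4 * l3) * (l1 + 4 * l2 + l3) := by
    have hid : (l1 + l2 + 4 * l3) * (l1 + 4 * l2 + l3) - (l1 - 2 * l2 - 2 * l3) ^ 2 =
        9 * (l1 * l2 + l1 * l3 + l2 * l3) := by ring
    linarith
  have hform := quadratic_form_nonneg (add_add_four_mul_pos h11 h2) hdisc s t
  have hε_mono : 2 * ε * (l1 + l2 + l3) * (s + t) ^ 2 ≤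
      2 * (2 / 3) * (l1 + l2 + l3) * (s + t) ^ 2 := by gcongr
  linarith

theorem claim1_general (ε l1 l2 l3 : ℝ)
    (h1 : 0 < l1 + l2 + l3) (h2 : 0 < l1 * l2 + l1 * l3 + l2 * l3)
    (hε : ε ≤ 2 / 3) (h11 : 0 < l2 + l3) :
    ∀ s t : ℝ,
      2 * (((l1 + l2 + l3) - l1) + ((l1 + l2 + l3) - l2)) /
          ((l1 + l2 + l3) * ((l1 + l2 + l3) - l1)) * s ^ 2 +
        2 * (((l1 + l2 + l3) - l1) + ((l1 + l2 + l3) - l3)) /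
          ((l1 + l2 + l3) * ((l1 + l2 + l3) - l1)) * t ^ 2 +
        4 * l1 / ((l1 + l2 + l3) * ((l1 + l2 + l3) - l1)) * (s * t) ≥
      2 * ε * (l1 + l2 + l3) * (s + t) ^ 2 /
          ((l1 + l2 + l3) * ((l1 + l2 + l3) - l1)) := by
  intro s t
  have hD : 0 ≤ (l1 + l2 + l3) * ((l1 + l2 + l3) - l1) := mul_nonneg h1.le (by linarith)
  simp only [div_mul_eq_mul_div, ← add_div]
  exact div_le_div_of_nonneg_right (claim1_numerator_le h1 h2 hε h11 s t) hD

/-- Claim 1: For ordered λ ∈ Γ₂ (so σ₂^{11} = λ₂+λ₃ > 0) and 0 < ε ≤ 2/3,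
for all s, t:
(2(σ₂^{11}+σ₂^{22})/(σ₁σ₂^{11}))s² + (2(σ₂^{11}+σ₂^{33})/(σ₁σ₂^{11}))t²
  + (4λ₁/(σ₁σ₂^{11}))st ≥ 2εσ₁(s+t)²/(σ₁σ₂^{11}). -/
theorem claim1 (ε l1 l2 l3 : ℝ) (hord1 : l1 ≥ l2) (hord2 : l2 ≥ l3)
    (h1 : 0 < l1 + l2 + l3) (h2 : 0 < l1 * l2 + l1 * l3 + l2 * l3)
    (hε0 : 0 < ε) (hε : ε ≤ 2 / 3) (h11 : 0 < l2 + l3) :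
    ∀ s t : ℝ,
      2 * (((l1 + l2 + l3) - l1) + ((l1 + l2 + l3) - l2)) /
          ((l1 + l2 + l3) * ((l1 + l2 + l3) - l1)) * s ^ 2 +
        2 * (((l1 + l2 + l3) - l1) + ((l1 + l2 + l3) - l3)) /
          ((l1 + l2 + l3) * ((l1 + l2 + l3) - l1)) * t ^ 2 +
        4 * l1 / ((l1 + l2 + l3) * ((l1 + l2 + l3) - l1)) * (s * t) ≥
      2 * ε * (l1 + l2 + l3) * (s + t) ^ 2 /
          ((l1 + l2 + l3) * ((l1 + l2 + l3) - l1)) :=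
  claim1_general ε l1 l2 l3 h1 h2 hε h11
end

section
/- (Claim 2, diagonal coefficient.) Let λ₁, λ₂, λ₃ ∈ ℝ with f := σ₂(λ) ≥ 0, and let 0 < δ ≤ 1/20. Then 2(σ₂^{11} + σ₂^{22})σ₁ − (1+δ)(λ₁ − λ₂)² = (1−δ)(λ₁ + (δ/(1−δ))λ₂)² + ((1−2δ)/(1−δ))λ₂² + 4λ₃² + 6f, and in particular this quantity is nonnegative. -/
/-- Claim 2, diagonal coefficient: For f := σ₂(λ) ≥ 0 and 0 < δ ≤ 1/20,
2(σ₂^{11}+σ₂^{22})σ₁ − (1+δ)(λ₁−λ₂)²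
  = (1−δ)(λ₁ + (δ/(1−δ))λ₂)² + ((1−2δ)/(1−δ))λ₂² + 4λ₃² + 6f,
and this quantity is nonnegative. -/
theorem claim2_diagonal (δ l1 l2 l3 : ℝ) (hδ0 : 0 < δ) (hδ : δ ≤ 1 / 20)
    (hf : 0 ≤ l1 * l2 + l1 * l3 + l2 * l3) :
    (2 * (((l1 + l2 + l3) - l1) + ((l1 + l2 + l3) - l2)) * (l1 + l2 + l3) -
        (1 + δ) * (l1 - l2) ^ 2
      = (1 - δ) * (l1 + δ / (1 - δ) * l2) ^ 2 + (1 - 2 * δ) / (1 - δ) * l2 ^ 2 +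
        4 * l3 ^ 2 + 6 * (l1 * l2 + l1 * l3 + l2 * l3)) ∧
    0 ≤ 2 * (((l1 + l2 + l3) - l1) + ((l1 + l2 + l3) - l2)) * (l1 + l2 + l3) -
        (1 + δ) * (l1 - l2) ^ 2 := by
  have h1 : (1 : ℝ) - δ ≠ 0 := by nlinarith
  have heq : 2 * (((l1 + l2 + l3) - l1) + ((l1 + l2 + l3) - l2)) * (l1 + l2 + l3) -
        (1 + δ) * (l1 - l2) ^ 2
      = (1 - δ) * (l1 + δ / (1 - δ) * l2) ^ 2 + (1 - 2 * δ) / (1 - δ) * l2 ^ 2 +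
        4 * l3 ^ 2 + 6 * (l1 * l2 + l1 * l3 + l2 * l3) := by
    field_simp
    ring
  refine ⟨heq, ?_⟩
  rw [heq]
  have h2 : (0:ℝ) ≤ (1 - δ) * (l1 + δ / (1 - δ) * l2) ^ 2 := mul_nonneg (by linarith) (sq_nonneg _)
  have h3 : (0:ℝ) ≤ (1 - 2 * δ) / (1 - δ) * l2 ^ 2 := by
    apply mul_nonneg (div_nonneg (by linarith) (by linarith)) (sq_nonneg _)
  nlinarith [sq_nonneg l3]
end

section
/- (Claim 2 of the paper.) Let λ₁ ≥ λ₂ ≥ λ₃ with σ₁ > 0, σ₂ > 0 (so f := σ₂(λ) > 0 and σ₂^{11} = λ₂+λ₃ > 0), and let 0 < δ ≤ 1/20. Then for all real s, t: (2(σ₂^{11}+σ₂^{22})/(σ₁σ₂^{11}))·s² + (2(σ₂^{11}+σ₂^{33})/(σ₁σ₂^{11}))·t² + (4λ₁/(σ₁σ₂^{11}))·s·t ≥ (1+δ)·((λ₂−λ₁)s + (λ₃−λ₁)t)²/(σ₁²σ₂^{11}). -/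
set_option maxHeartbeats 1000000 in
private lemma claim2_aux0 (l1 l2 l3 : ℝ) (hord1 : l1 ≥ l2) (hord2 : l2 ≥ l3)
    (h1 : 0 < l1 + l2 + l3) (h2 : 0 < l1 * l2 + l1 * l3 + l2 * l3)
    (h11 : 0 < l2 + l3) :
    0 ≤ (2*(l1+l2+l3)*(l1+l2+2*l3) - (l1-l2)^2) *
      (2*(l1+l2+l3)*(l1+2*l2+l3) - (l1-l3)^2) -
      (2*l1*(l1+l2+l3) - (l1-l2)*(l1-l3))^2 := by
  have hl1 : 0 < l1 := by linarith
  nlinarith [mul_pos (mul_pos hl1 hl1) h2, mul_pos h2 h2, mul_pos (mul_pos h1 h1) h2,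
    mul_pos (mul_pos h1 hl1) h2,
    mul_nonneg (mul_nonneg (sub_nonneg.2 hord1) (sub_nonneg.2 hord2)) h2.le,
    mul_pos (mul_pos h1 h11) h2, mul_pos (mul_pos h11 h11) h2,
    mul_nonneg (mul_nonneg (sub_nonneg.2 hord1) (sub_nonneg.2 hord2)) (mul_pos h1 h11).le,
    mul_nonneg (mul_nonneg (sub_nonneg.2 hord1) (sub_nonneg.2 hord2)) (mul_pos hl1 h11).le,
    mul_nonneg (mul_nonneg (sub_nonneg.2 hord1) (sub_nonneg.2 hord2)) (mul_pos hl1 h1).le,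
    mul_nonneg (sq_nonneg (l2-l3)) (mul_pos hl1 h1).le,
    mul_nonneg (sq_nonneg (l2-l3)) (mul_pos hl1 hl1).le,
    mul_nonneg (sq_nonneg (l2-l3)) h2.le]

set_option maxHeartbeats 1000000 in
private lemma claim2_auxQ (l1 l2 l3 : ℝ) (hord1 : l1 ≥ l2) (hord2 : l2 ≥ l3)
    (h1 : 0 < l1 + l2 + l3) (h2 : 0 < l1 * l2 + l1 * l3 + l2 * l3)
    (h11 : 0 < l2 + l3) :
    0 ≤ 20*((2*(l1+l2+l3)*(l1+l2+2*l3) - (1+(1:ℝ)/20)*(l1-l2)^2) *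
      (2*(l1+l2+l3)*(l1+2*l2+l3) - (1+(1:ℝ)/20)*(l1-l3)^2) -
      (2*l1*(l1+l2+l3) - (1+(1:ℝ)/20)*(l1-l2)*(l1-l3))^2) := by
  have hl1 : 0 < l1 := by linarith
  nlinarith [mul_pos (mul_pos hl1 hl1) h2, mul_pos h2 h2, mul_pos (mul_pos h1 h1) h2,
    mul_pos (mul_pos h1 hl1) h2,
    mul_nonneg (mul_nonneg (sub_nonneg.2 hord1) (sub_nonneg.2 hord2)) h2.le,
    mul_pos (mul_pos h1 h11) h2, mul_pos (mul_pos h11 h11) h2,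
    mul_nonneg (mul_nonneg (sub_nonneg.2 hord1) (sub_nonneg.2 hord2)) (mul_pos h1 h11).le,
    mul_nonneg (mul_nonneg (sub_nonneg.2 hord1) (sub_nonneg.2 hord2)) (mul_pos hl1 h11).le,
    mul_nonneg (mul_nonneg (sub_nonneg.2 hord1) (sub_nonneg.2 hord2)) (mul_pos hl1 h1).le,
    mul_nonneg (sq_nonneg (l2-l3)) (mul_pos hl1 h1).le,
    mul_nonneg (sq_nonneg (l2-l3)) (mul_pos hl1 hl1).le,
    mul_nonneg (sq_nonneg (l2-l3)) h2.le]

set_option maxHeartbeats 1000000 in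
/-- Claim 2: For ordered λ ∈ Γ₂ (so σ₂^{11} = λ₂+λ₃ > 0) and 0 < δ ≤ 1/20,
for all s, t:
(2(σ₂^{11}+σ₂^{22})/(σ₁σ₂^{11}))s² + (2(σ₂^{11}+σ₂^{33})/(σ₁σ₂^{11}))t²
  + (4λ₁/(σ₁σ₂^{11}))st ≥ (1+δ)((λ₂−λ₁)s + (λ₃−λ₁)t)²/(σ₁²σ₂^{11}). -/
theorem claim2 (δ l1 l2 l3 : ℝ) (hord1 : l1 ≥ l2) (hord2 : l2 ≥ l3)
    (h1 : 0 < l1 + l2 + l3) (h2 : 0 < l1 * l2 + l1 * l3 + l2 * l3)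
    (h11 : 0 < l2 + l3) (hδ0 : 0 < δ) (hδ : δ ≤ 1 / 20) :
    ∀ s t : ℝ,
      2 * (((l1 + l2 + l3) - l1) + ((l1 + l2 + l3) - l2)) /
          ((l1 + l2 + l3) * ((l1 + l2 + l3) - l1)) * s ^ 2 +
        2 * (((l1 + l2 + l3) - l1) + ((l1 + l2 + l3) - l3)) /
          ((l1 + l2 + l3) * ((l1 + l2 + l3) - l1)) * t ^ 2 +
        4 * l1 / ((l1 + l2 + l3) * ((l1 + l2 + l3) - l1)) * (s * t) ≥
      (1 + δ) * ((l2 - l1) * s + (l3 - l1) * t) ^ 2 /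
          ((l1 + l2 + l3) ^ 2 * ((l1 + l2 + l3) - l1)) := by
  intro s t
  have hl1 : 0 < l1 := by linarith
  have ha : 0 < 2*(l1+l2+l3)*(l1+l2+2*l3) - (1+δ)*(l1-l2)^2 := by
    nlinarith [mul_pos h1 h11, sq_nonneg (l1-l2), sq_nonneg (l1+l3),
      mul_nonneg (sub_nonneg.2 hord1) (sub_nonneg.2 hord2), sq_nonneg (l2+l3)]
  have hP0 := claim2_aux0 l1 l2 l3 hord1 hord2 h1 h2 h11
  have hQ := claim2_auxQ l1 l2 l3 hord1 hord2 h1 h2 h11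
  have hdisc : 0 ≤ (2*(l1+l2+l3)*(l1+l2+2*l3) - (1+δ)*(l1-l2)^2) *
      (2*(l1+l2+l3)*(l1+2*l2+l3) - (1+δ)*(l1-l3)^2) -
      (2*l1*(l1+l2+l3) - (1+δ)*(l1-l2)*(l1-l3))^2 := by
    nlinarith [mul_nonneg (by linarith : (0:ℝ) ≤ 1 - 20*δ) hP0,
      mul_nonneg hδ0.le hQ]
  have key : 0 ≤ (2*(l1+l2+l3)*(l1+l2+2*l3) - (1+δ)*(l1-l2)^2)*s^2 +
      2*(2*l1*(l1+l2+l3) - (1+δ)*(l1-l2)*(l1-l3))*(s*t) +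
      (2*(l1+l2+l3)*(l1+2*l2+l3) - (1+δ)*(l1-l3)^2)*t^2 := by
    nlinarith [sq_nonneg ((2*(l1+l2+l3)*(l1+l2+2*l3) - (1+δ)*(l1-l2)^2)*s +
        (2*l1*(l1+l2+l3) - (1+δ)*(l1-l2)*(l1-l3))*t),
      mul_nonneg hdisc (sq_nonneg t), ha]
  have hP : 0 < (l1 + l2 + l3) - l1 := by linarith
  have hD : 0 < (l1 + l2 + l3) ^ 2 * ((l1 + l2 + l3) - l1) := by positivity
  have heq : 2 * (((l1 + l2 + l3) - l1) + ((l1 + l2 + l3) - l2)) /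
          ((l1 + l2 + l3) * ((l1 + l2 + l3) - l1)) * s ^ 2 +
        2 * (((l1 + l2 + l3) - l1) + ((l1 + l2 + l3) - l3)) /
          ((l1 + l2 + l3) * ((l1 + l2 + l3) - l1)) * t ^ 2 +
        4 * l1 / ((l1 + l2 + l3) * ((l1 + l2 + l3) - l1)) * (s * t)
      = (2*(l1+l2+l3)*(l1+l2+2*l3)*s^2 + 2*(l1+l2+l3)*(l1+2*l2+l3)*t^2
          + 4*l1*(l1+l2+l3)*(s*t)) / ((l1 + l2 + l3) ^ 2 * ((l1 + l2 + l3) - l1)) := by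
    field_simp
    ring
  rw [heq, ge_iff_le, div_le_div_iff₀ hD hD]
  nlinarith [mul_nonneg key hD.le]
end

section
/- Let M be a smooth hypersurface in ℝ⁴ with second fundamental form h (with respect to unit normal ν) and induced metric g, whose principal curvatures lie in Γ₂ at every point. In an orthonormal tangent frame where h is diagonal with entries λ₁, λ₂, λ₃, the matrix G_{ij} := g_{ij} + Σ_k h_i^k h_{kj} (the induced metric of the Gauss map graph X ↦ (X, ν) into ℝ⁴×ℝ⁴) is positive definite and its inverse is G^{ij} = σ₂^{ij}/(σ₁ − σ₃), where σ₂^{ij} is the derivative matrix of σ₂ at h and σ₁, σ₃ are the first and third elementary symmetric functions of (λ₁, λ₂, λ₃). -/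
/-!
In a diagonalizing frame `G = 1 + h² = diag(1 + λᵢ²)` is positive definite, and its inverse is
`diag((1 + λᵢ²)⁻¹)`. Everything then rests on the scalar identity
`(1 + λᵢ²)(σ₁ − λᵢ) = σ₁ − σ₃ + λᵢ(σ₂ − 1)`, which for `σ₂ = 1` reads `(1 + λᵢ²)⁻¹ = (σ₁ − λᵢ)/(σ₁ − σ₃)`.
The same identity gives `σ₁ ≠ σ₃`: otherwise `λ₂ = −λ₃` and `λ₂λ₃ = 1`.
-/

open Matrix
open scoped ComplexOrder

theorem Matrix.posDef_one_add_conjTranspose_mul_self {m 𝕜 : Type*} [Fintype m] [DecidableEq m]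
    [RCLike 𝕜] (A : Matrix m m 𝕜) : (1 + Aᴴ * A).PosDef :=
  PosDef.one.add_posSemidef (posSemidef_conjTranspose_mul_self A)

theorem Matrix.one_add_diagonal_mul_self {m R : Type*} [Fintype m] [DecidableEq m] [CommRing R]
    (l : m → R) :
    1 + diagonal l * diagonal l = diagonal fun i => 1 + l i ^ 2 := by
  rw [diagonal_mul_diagonal, ← diagonal_one, diagonal_add]
  simp only [sq]

theorem Matrix.inv_diagonal_of_ne_zero {m K : Type*} [Fintype m] [DecidableEq m] [Field K]
    {v : m → K} (hv : ∀ i, v i ≠ 0) : (diagonal v)⁻¹ = diagonal v⁻¹ := by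
  refine inv_eq_right_inv ?_
  rw [diagonal_mul_diagonal, ← diagonal_one]
  exact congrArg diagonal (funext fun i => mul_inv_cancel₀ (hv i))

theorem one_add_sq_mul_sigma1_sub (l : Fin 3 → ℝ) (i : Fin 3) :
    (1 + l i ^ 2) * (l 0 + l 1 + l 2 - l i) =
      (l 0 + l 1 + l 2 - l 0 * l 1 * l 2) + l i * (l 0 * l 1 + l 0 * l 2 + l 1 * l 2 - 1) := by
  fin_cases i <;> simp <;> ring

theorem sigma1_sub_sigma3_ne_zero {l : Fin 3 → ℝ} (hσ₂ : l 0 * l 1 + l 0 * l 2 + l 1 * l 2 = 1) :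
    l 0 + l 1 + l 2 - l 0 * l 1 * l 2 ≠ 0 := by
  intro h
  have hsum : l 1 + l 2 = 0 := by
    have hfactor := one_add_sq_mul_sigma1_sub l 0
    rw [h, hσ₂, sub_self, mul_zero, add_zero] at hfactor
    have := (mul_eq_zero.mp hfactor).resolve_left (by positivity)
    linarith
  have hprod : l 1 * l 2 = 1 := by linear_combination hσ₂ - l 0 * hsum
  nlinarith [sq_nonneg (l 1 - l 2)]

theorem inv_one_add_sq_eq_div {l : Fin 3 → ℝ} (hσ₂ : l 0 * l 1 + l 0 * l 2 + l 1 * l 2 = 1)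
    (i : Fin 3) :
    (1 + l i ^ 2)⁻¹ = (l 0 + l 1 + l 2 - l i) / (l 0 + l 1 + l 2 - l 0 * l 1 * l 2) := by
  rw [eq_div_iff (sigma1_sub_sigma3_ne_zero hσ₂), inv_mul_eq_iff_eq_mul₀ (by positivity),
    one_add_sq_mul_sigma1_sub, hσ₂]
  ring

theorem gauss_map_graph_metric_general (l : Fin 3 → ℝ)
    (heq : l 0 * l 1 + l 0 * l 2 + l 1 * l 2 = 1) :
    ((1 : Matrix (Fin 3) (Fin 3) ℝ) + Matrix.diagonal l * Matrix.diagonal l).PosDef ∧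
    ∀ i j : Fin 3,
      ((1 : Matrix (Fin 3) (Fin 3) ℝ) + Matrix.diagonal l * Matrix.diagonal l)⁻¹ i j =
        ((l 0 + l 1 + l 2) * (if i = j then 1 else 0) - Matrix.diagonal l i j) /
          ((l 0 + l 1 + l 2) - l 0 * l 1 * l 2) := by
  refine ⟨?_, fun i j => ?_⟩
  · simpa using posDef_one_add_conjTranspose_mul_self (diagonal l)
  · rw [one_add_diagonal_mul_self, inv_diagonal_of_ne_zero fun i => by positivity,
      diagonal_apply, diagonal_apply]
    split_ifs
    · rw [Pi.inv_apply, inv_one_add_sq_eq_div heq, mul_one]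
    · simp

/-- For a hypersurface in ℝ⁴ whose second fundamental form is, in an
orthonormal tangent frame (so g = δ), the diagonal matrix h = diag(λ₁,λ₂,λ₃) with
principal curvatures λ ∈ Γ₂ satisfying the scalar curvature equation σ₂(λ) = 1,
the induced metric G = g + h·h of the Gauss map graph X ↦ (X, ν) ⊂ ℝ⁴×ℝ⁴ is
positive definite and its inverse is G^{ij} = σ₂^{ij}/(σ₁ − σ₃), where
σ₂^{ij} = σ₁δ_{ij} − h_{ij}. -/
theorem gauss_map_graph_metric (l : Fin 3 → ℝ)
    (h1 : 0 < l 0 + l 1 + l 2)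
    (h2 : 0 < l 0 * l 1 + l 0 * l 2 + l 1 * l 2)
    (heq : l 0 * l 1 + l 0 * l 2 + l 1 * l 2 = 1) :
    ((1 : Matrix (Fin 3) (Fin 3) ℝ) + Matrix.diagonal l * Matrix.diagonal l).PosDef ∧
    ∀ i j : Fin 3,
      ((1 : Matrix (Fin 3) (Fin 3) ℝ) + Matrix.diagonal l * Matrix.diagonal l)⁻¹ i j =
        ((l 0 + l 1 + l 2) * (if i = j then 1 else 0) - Matrix.diagonal l i j) /
          ((l 0 + l 1 + l 2) - l 0 * l 1 * l 2) :=
  gauss_map_graph_metric_general l heq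
end
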